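/- Uniqueness theorem for Laplace transforms: if f : ℝ → ℂ is integrable, vanishes a.e. on some (-∞, a), and its Laplace transform Lf(z) = 0 for all z with Re z > 0, then f = 0 a.e. -/

import Mathlib

/-!
For real `σ > 0`, `Lf(σ + 2πiξ)` is the Fourier transform at `ξ` of `t ↦ f t * exp (-σ t)`,
which is integrable because `f` vanishes on `(-∞, a)`. So that function has vanishing Fourier
transform, and the Fourier transform is injective on `L¹`: writing a test function `φ` as `𝓕 ψ`
with `ψ` Schwartz, self-adjointness gives `∫ φ h = ∫ ψ 𝓕h = 0`.
-/

open MeasureTheory Set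

noncomputable def laplace (f : ℝ → ℂ) (z : ℂ) : ℂ :=
  ∫ t : ℝ, f t * Complex.exp (-z * t)

open FourierTransform Real SchwartzMap

theorem MeasureTheory.Integrable.ae_eq_zero_of_fourier_eq_zero
    {V E : Type*} [NormedAddCommGroup V] [InnerProductSpace ℝ V] [FiniteDimensional ℝ V]
    [MeasurableSpace V] [BorelSpace V] [NormedAddCommGroup E] [NormedSpace ℂ E] [CompleteSpace E]
    {f : V → E} (hf : Integrable f) (hfourier : 𝓕 f = 0) : f =ᵐ[volume] 0 := by
  refine ae_eq_zero_of_integral_contDiff_smul_eq_zero hf.locallyIntegrable fun g g_smooth g_supp ↦ ?_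
  let φ : 𝓢(V, ℂ) := (g_supp.comp_left (g := Complex.ofRealCLM) rfl).toSchwartzMap (by fun_prop)
  let ψ : 𝓢(V, ℂ) := 𝓕⁻ φ
  have h_self_adjoint := VectorFourier.integral_fourierIntegral_smul_eq_flip (L := innerₗ V)
    continuous_fourierChar continuous_inner ψ.integrable (μ := volume) hf
  rw [flip_innerₗ] at h_self_adjoint
  change ∫ ξ, 𝓕 (⇑ψ) ξ • f ξ = ∫ x, ψ x • 𝓕 f x at h_self_adjoint
  rw [← fourier_coe, FourierTransform.fourier_fourierInv_eq, hfourier] at h_self_adjoint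
  simpa [φ, Complex.real_smul] using h_self_adjoint

theorem MeasureTheory.Integrable.mul_cexp_neg_mul {f : ℝ → ℂ} (hf : Integrable f) {a : ℝ}
    (hsupp : ∀ᵐ t : ℝ, t < a → f t = 0) {z : ℂ} (hz : 0 ≤ z.re) :
    Integrable fun t : ℝ ↦ f t * Complex.exp (-z * t) := by
  refine (hf.norm.const_mul (Real.exp (-z.re * a))).mono'
    (hf.1.mul (by fun_prop : Continuous fun t : ℝ ↦ Complex.exp (-z * t)).aestronglyMeasurable) ?_
  filter_upwards [hsupp] with t ht
  rcases lt_or_ge t a with hta | hat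
  · simp [ht hta]
  · rw [norm_mul, Complex.norm_exp, mul_comm]
    gcongr
    simpa using mul_le_mul_of_nonneg_left hat hz

theorem fourier_mul_cexp_neg_mul_eq_laplace (f : ℝ → ℂ) (σ ξ : ℝ) :
    𝓕 (fun t : ℝ ↦ f t * Complex.exp (-σ * t)) ξ = laplace f (σ + 2 * π * ξ * Complex.I) := by
  rw [fourier_real_eq_integral_exp_smul, laplace]
  congr 1 with t
  rw [smul_eq_mul, mul_left_comm, mul_assoc, ← Complex.exp_add]
  congr 2
  push_cast
  ring

theorem laplace_uniqueness
    (f : ℝ → ℂ) (hf : Integrable f)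
    (hsupp : ∃ a : ℝ, ∀ᵐ t : ℝ, t < a → f t = 0)
    (hzero : ∀ z : ℂ, 0 < z.re → laplace f z = 0) :
    ∀ᵐ t : ℝ, f t = 0 := by
  obtain ⟨a, ha⟩ := hsupp
  set h : ℝ → ℂ := fun t ↦ f t * Complex.exp (-(1 : ℝ) * t)
  have h_int : Integrable h := hf.mul_cexp_neg_mul ha (by simp)
  have h_fourier : 𝓕 h = 0 := funext fun ξ ↦ by
    rw [fourier_mul_cexp_neg_mul_eq_laplace]
    exact hzero _ (by simp)
  filter_upwards [h_int.ae_eq_zero_of_fourier_eq_zero h_fourier] with t ht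
  exact (mul_eq_zero.1 ht).resolve_right (Complex.exp_ne_zero _)
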